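/- arXiv:2209.05549 — 4 statements merged into one kernel-verified Lean document; each statement's English description precedes it below -/
import Mathlib

section
/- If φ is a rational multiple of 2π (i.e., φ/(2π) ∈ ℚ) and cos φ is rational, then cos φ ∈ {0, 1/2, -1/2, 1, -1}. -/
open Real

namespace Port

theorem niven (φ : ℝ) (hφ : ∃ q : ℚ, φ / (2 * π) = q)
    (hcos : ∃ r : ℚ, Real.cos φ = r) :
    Real.cos φ ∈ ({0, 1/2, -1/2, 1, -1} : Set ℝ) := by
  obtain ⟨q, hq⟩ := hφ
  have hφ_rat_mul_pi : φ = ((2 * q : ℚ) : ℝ) * π := by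
    rw [div_eq_iff (by positivity)] at hq
    push_cast
    linarith
  have h := _root_.niven ⟨2 * q, hφ_rat_mul_pi⟩ hcos
  simp only [Set.mem_insert_iff, Set.mem_singleton_iff] at h ⊢
  tauto
end Port
end

section
/- If φ/(2π) ∈ ℚ, cos φ ∈ ℚ, and additionally φ is not an integer multiple of π/2 or of π/3 (equivalently, 2φ/π ∉ ℤ and 3φ/π ∉ ℤ), then a contradiction follows; i.e., no such φ exists. -/
/-! Write φ = rπ with r = 2q ∈ ℚ. Niven's theorem, in the form that the fractional part of r is
0, 1/3, 1/2 or 2/3, makes 2r or 3r an integer. -/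

open Real

theorem exists_int_two_mul_or_three_mul_eq_of_cos_rat_mul_pi {r : ℚ}
    (hcos : ∃ q : ℚ, cos (r * π) = q) :
    (∃ k : ℤ, 2 * r = k) ∨ ∃ k : ℤ, 3 * r = k := by
  have hr : ⌊r⌋ + Int.fract r = r := Int.floor_add_fract r
  have hfract := niven_fract_angle_div_pi_eq hcos
  simp only [Set.mem_insert_iff, Set.mem_singleton_iff] at hfract
  rcases hfract with h | h | h | h
  · exact .inl ⟨2 * ⌊r⌋, by push_cast; linarith⟩
  · exact .inr ⟨3 * ⌊r⌋ + 1, by push_cast; linarith⟩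
  · exact .inl ⟨2 * ⌊r⌋ + 1, by push_cast; linarith⟩
  · exact .inr ⟨3 * ⌊r⌋ + 2, by push_cast; linarith⟩

theorem niven_strict (φ : ℝ) (hφ : ∃ q : ℚ, φ / (2 * π) = q)
    (hcos : ∃ r : ℚ, Real.cos φ = r)
    (h2 : ¬ ∃ k : ℤ, 2 * φ / π = k)
    (h3 : ¬ ∃ k : ℤ, 3 * φ / π = k) : False := by
  obtain ⟨q, hq⟩ := hφ
  have hφ : φ = ((2 * q : ℚ) : ℝ) * π := by
    rw [div_eq_iff (by positivity)] at hq
    rw [hq]; push_cast; ring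
  rw [hφ] at hcos h2 h3
  simp only [mul_div_assoc, mul_div_cancel_right₀ _ pi_ne_zero] at h2 h3
  rcases exists_int_two_mul_or_three_mul_eq_of_cos_rat_mul_pi hcos with ⟨k, hk⟩ | ⟨k, hk⟩
  · exact h2 ⟨k, by exact_mod_cast hk⟩
  · exact h3 ⟨k, by exact_mod_cast hk⟩
end

section
/- Suppose real numbers s₁, s₂, t₁, t₂ ∈ (0,1) are such that s₁², s₂², t₁², t₂² ∈ ℚ, and φ₀, φ₁ are rational multiples of 2π with cos 2φ₀ ∉ ℚ and cos 2φ₁ ∉ ℚ. If s₁·s₂·cos φ₀ ∈ ℚ then cos 2φ₀ ∈ ℚ; hence s₁·s₂·cos φ₀ ∉ ℚ. -/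
open Real

theorem key_step (s₁ s₂ t₁ t₂ φ₀ φ₁ : ℝ)
    (hs₁ : s₁ ∈ Set.Ioo (0:ℝ) 1) (hs₂ : s₂ ∈ Set.Ioo (0:ℝ) 1)
    (ht₁ : t₁ ∈ Set.Ioo (0:ℝ) 1) (ht₂ : t₂ ∈ Set.Ioo (0:ℝ) 1)
    (hs₁q : ∃ q : ℚ, s₁ ^ 2 = q) (hs₂q : ∃ q : ℚ, s₂ ^ 2 = q)
    (ht₁q : ∃ q : ℚ, t₁ ^ 2 = q) (ht₂q : ∃ q : ℚ, t₂ ^ 2 = q)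
    (hφ₀ : ∃ q : ℚ, φ₀ / (2 * π) = q) (hφ₁ : ∃ q : ℚ, φ₁ / (2 * π) = q)
    (h0 : Irrational (Real.cos (2 * φ₀))) (h1 : Irrational (Real.cos (2 * φ₁))) :
    ((∃ q : ℚ, s₁ * s₂ * Real.cos φ₀ = q) → ∃ q : ℚ, Real.cos (2 * φ₀) = q) ∧
      Irrational (s₁ * s₂ * Real.cos φ₀) := by
  obtain ⟨a, ha⟩ := hs₁q
  obtain ⟨b, hb⟩ := hs₂q
  have ha0 : (a:ℝ) ≠ 0 := by
    rw [← ha]; exact pow_ne_zero _ (ne_of_gt hs₁.1)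
  have hb0 : (b:ℝ) ≠ 0 := by
    rw [← hb]; exact pow_ne_zero _ (ne_of_gt hs₂.1)
  have key : (∃ q : ℚ, s₁ * s₂ * Real.cos φ₀ = q) → ∃ q : ℚ, Real.cos (2 * φ₀) = q := by
    rintro ⟨q, hq⟩
    refine ⟨2 * q ^ 2 / (a * b) - 1, ?_⟩
    have hab0 : (a:ℚ) ≠ 0 := by exact_mod_cast ha0
    have hbb0 : (b:ℚ) ≠ 0 := by exact_mod_cast hb0
    have habne : (a:ℝ) * b ≠ 0 := mul_ne_zero ha0 hb0
    have : Real.cos φ₀ ^ 2 = (q:ℝ) ^ 2 / (a * b) := by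
      rw [← ha, ← hb, ← hq]
      rw [eq_div_iff (by rw [ha, hb]; exact habne)]
      ring
    rw [Real.cos_two_mul, this]
    push_cast
    field_simp
  refine ⟨key, ?_⟩
  rintro ⟨q, hq⟩
  obtain ⟨r, hr⟩ := key ⟨q, hq.symm⟩
  exact h0 ⟨r, hr.symm⟩
end

section
/- Let θ_{qx}, θ_{qy}, θ_{qz} ∈ [0, π] be the angular distances from a point q on the unit sphere to three mutually orthogonal unit vectors x, y, z. Then |sin θ_{qx}|·|sin θ_{qy}| ≥ |cos θ_{qz}|. -/
open Real

/-! Writing `a, b, c` for the coordinates of `q` along `x, y, z`, Bessel's inequality gives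
`a² + b² + c² ≤ 1`, and then `(1 - a²)(1 - b²) = 1 - a² - b² + a²b² ≥ c²`. -/

section Bessel

variable {E : Type*} [NormedAddCommGroup E] [InnerProductSpace ℝ E]

theorem orthonormal_three_iff {x y z : E} :
    Orthonormal ℝ ![x, y, z] ↔
      ‖x‖ = 1 ∧ ‖y‖ = 1 ∧ ‖z‖ = 1 ∧
        inner ℝ x y = (0 : ℝ) ∧ inner ℝ y z = (0 : ℝ) ∧ inner ℝ x z = (0 : ℝ) := by
  simp only [orthonormal_vecCons_iff, Fin.forall_fin_succ, IsEmpty.forall_iff,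
    Orthonormal.of_isEmpty, Matrix.cons_val_zero, Matrix.cons_val_succ, and_true]
  tauto

theorem Orthonormal.sq_inner_add_sq_inner_add_sq_inner_le {x y z : E}
    (hv : Orthonormal ℝ ![x, y, z]) (q : E) :
    inner ℝ q x ^ 2 + inner ℝ q y ^ 2 + inner ℝ q z ^ 2 ≤ ‖q‖ ^ 2 := by
  have := hv.sum_inner_products_le (s := Finset.univ) q
  simpa [Fin.sum_univ_three, real_inner_comm, add_assoc] using this

end Bessel

theorem abs_le_sqrt_one_sub_sq_mul_sqrt_one_sub_sq {a b c : ℝ} (h : a ^ 2 + b ^ 2 + c ^ 2 ≤ 1) :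
    |c| ≤ √(1 - a ^ 2) * √(1 - b ^ 2) := by
  rw [← sqrt_mul (by nlinarith [sq_nonneg b, sq_nonneg c]), ← sqrt_sq_eq_abs]
  exact sqrt_le_sqrt (by nlinarith [sq_nonneg (a * b)])

theorem uncertainty_sphere (q x y z : EuclideanSpace ℝ (Fin 3))
    (hq : ‖q‖ = 1) (hx : ‖x‖ = 1) (hy : ‖y‖ = 1) (hz : ‖z‖ = 1)
    (hxy : inner ℝ x y = (0:ℝ)) (hyz : inner ℝ y z = (0:ℝ)) (hxz : inner ℝ x z = (0:ℝ)) :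
    |Real.sin (Real.arccos (inner ℝ q x))| * |Real.sin (Real.arccos (inner ℝ q y))| ≥
      |Real.cos (Real.arccos (inner ℝ q z))| := by
  have hbessel := (orthonormal_three_iff.mpr ⟨hx, hy, hz, hxy, hyz, hxz⟩)
    |>.sq_inner_add_sq_inner_add_sq_inner_le q
  rw [hq, one_pow] at hbessel
  have hc : |inner ℝ q z| ≤ (1 : ℝ) := (sq_le_one_iff_abs_le_one _).mp <| by
    nlinarith [sq_nonneg (inner ℝ q x : ℝ), sq_nonneg (inner ℝ q y : ℝ)]
  rw [sin_arccos, sin_arccos, cos_arccos (abs_le.mp hc).1 (abs_le.mp hc).2,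
    abs_of_nonneg (sqrt_nonneg _), abs_of_nonneg (sqrt_nonneg _)]
  exact abs_le_sqrt_one_sub_sq_mul_sqrt_one_sub_sq hbessel
end
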